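/- arXiv:2409.12420 — 2 statements merged into one kernel-verified Lean document; each statement's English description precedes it below -/
import Mathlib

section
/- Let Ŵ : ℤ → ℝ and k_max ∈ ℤ satisfy Ŵ(k_max) > 0 and Ŵ(k) ≤ Ŵ(k_max) for all k, and set α* = 1/Ŵ(k_max). Let û : ℤ → ℂ be square-summable with û(k_max) ≠ 0 (input aligned with the leading mode). For α ∈ (0, α*), define the steady-state response ẑ_α(k) = û(k)/(1 − α Ŵ(k)). Then: (i) 1 − α Ŵ(k) ≥ 1 − α Ŵ(k_max) > 0 for all k, so ẑ_α is square-summable; and (ii) the ℓ²-norm (Σ_k |ẑ_α(k)|²)^{1/2} tends to +∞ as α → α* from below. -/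
/-!
Since `Ŵ(k) ≤ Ŵ(k_max)`, every denominator `1 - α Ŵ(k)` is at least `1 - α Ŵ(k_max) > 0`, so
`ẑ_α` is dominated by a multiple of `û` and is square-summable. Its ℓ²-norm is at least the single
coefficient `|û(k_max)| / (1 - α Ŵ(k_max))`, which blows up as `α ↑ 1 / Ŵ(k_max)` because
`û(k_max) ≠ 0`.
-/

open Filter Topology

lemma one_sub_mul_pos_of_lt_one_div {α w : ℝ} (hw : 0 < w) (hα : α < 1 / w) :
    0 < 1 - α * w := by
  rw [lt_div_iff₀ hw] at hα
  linarith

lemma summable_sq_norm_div_ofReal {ι : Type*} {u : ι → ℂ} {d : ι → ℝ} {c : ℝ}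
    (hu : Summable fun k => ‖u k‖ ^ 2) (hc : 0 < c) (hd : ∀ k, c ≤ d k) :
    Summable fun k => ‖u k / (d k : ℂ)‖ ^ 2 := by
  refine (hu.div_const (c ^ 2)).of_nonneg_of_le (fun k => by positivity) fun k => ?_
  have hdk : 0 < d k := hc.trans_le (hd k)
  rw [norm_div, Complex.norm_real, Real.norm_of_nonneg hdk.le, div_pow]
  gcongr
  exact hd k

lemma norm_le_sqrt_tsum_sq_norm {ι E : Type*} [SeminormedAddCommGroup E] {f : ι → E}
    (hf : Summable fun k => ‖f k‖ ^ 2) (i : ι) : ‖f i‖ ≤ √(∑' k, ‖f k‖ ^ 2) :=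
  (Real.le_sqrt (norm_nonneg _) (tsum_nonneg fun _ => by positivity)).2
    (hf.le_tsum i fun _ _ => by positivity)

lemma tendsto_div_one_sub_mul_nhdsLT_one_div {w c : ℝ} (hw : 0 < w) (hc : 0 < c) :
    Tendsto (fun α => c / (1 - α * w)) (𝓝[<] (1 / w)) atTop := by
  have hzero : Tendsto (fun α => 1 - α * w) (𝓝[<] (1 / w)) (𝓝[>] 0) := by
    refine tendsto_nhdsWithin_of_tendsto_nhds_of_eventually_within _ ?_ ?_
    · have hlim : 1 - 1 / w * w = 0 := by rw [one_div_mul_cancel hw.ne', sub_self]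
      exact hlim ▸ (Continuous.tendsto (by fun_prop) (1 / w)).mono_left nhdsWithin_le_nhds
    · filter_upwards [self_mem_nhdsWithin] with α hα
      exact one_sub_mul_pos_of_lt_one_div hw hα
  simpa only [div_eq_mul_inv, Pi.inv_apply] using hzero.inv_tendsto_nhdsGT_zero.const_mul_atTop hc

/-- for an input aligned with the leading mode (`û(k_max) ≠ 0`), the
steady-state response `ẑ_α(k) = û(k)/(1 − α Ŵ(k))` satisfies: (i) for all
`α ∈ (0, α*)`, `1 − α Ŵ(k) ≥ 1 − α Ŵ(k_max) > 0` and `ẑ_α` is square-summable; and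
(ii) the ℓ²-norm of `ẑ_α` tends to `+∞` as `α → α* = 1/Ŵ(k_max)` from below. -/
theorem aligned_input_amplified_near_bifurcation
    (What : ℤ → ℝ) (kmax : ℤ)
    (hpos : 0 < What kmax) (hmax : ∀ k, What k ≤ What kmax)
    (uhat : ℤ → ℂ) (hu : Summable fun k => ‖uhat k‖ ^ 2)
    (halign : uhat kmax ≠ 0) :
    (∀ α ∈ Set.Ioo (0 : ℝ) (1 / What kmax),
        (∀ k : ℤ, 1 - α * What kmax ≤ 1 - α * What k) ∧
        0 < 1 - α * What kmax ∧
        Summable fun k => ‖uhat k / ((1 - α * What k : ℝ) : ℂ)‖ ^ 2) ∧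
    Tendsto
      (fun α : ℝ =>
        Real.sqrt (∑' k : ℤ, ‖uhat k / ((1 - α * What k : ℝ) : ℂ)‖ ^ 2))
      (nhdsWithin (1 / What kmax) (Set.Iio (1 / What kmax))) atTop := by
  have hresponse : ∀ α ∈ Set.Ioo (0 : ℝ) (1 / What kmax),
      (∀ k : ℤ, 1 - α * What kmax ≤ 1 - α * What k) ∧
        0 < 1 - α * What kmax ∧
        Summable fun k => ‖uhat k / ((1 - α * What k : ℝ) : ℂ)‖ ^ 2 := by
    rintro α ⟨hα₀, hα₁⟩
    have hden : ∀ k, 1 - α * What kmax ≤ 1 - α * What k := fun k =>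
      sub_le_sub_left (mul_le_mul_of_nonneg_left (hmax k) hα₀.le) 1
    have hden_pos := one_sub_mul_pos_of_lt_one_div hpos hα₁
    exact ⟨hden, hden_pos, summable_sq_norm_div_ofReal hu hden_pos hden⟩
  refine ⟨hresponse, tendsto_atTop_mono' _ ?_
    (tendsto_div_one_sub_mul_nhdsLT_one_div hpos (norm_pos_iff.2 halign))⟩
  filter_upwards [Ioo_mem_nhdsLT (by positivity : (0 : ℝ) < 1 / What kmax)] with α hα
  obtain ⟨-, hden_pos, hsum⟩ := hresponse α hα
  calc ‖uhat kmax‖ / (1 - α * What kmax)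
      = ‖uhat kmax / ((1 - α * What kmax : ℝ) : ℂ)‖ := by
        rw [norm_div, Complex.norm_real, Real.norm_of_nonneg hden_pos.le]
    _ ≤ _ := norm_le_sqrt_tsum_sq_norm hsum kmax
end

section
/- Let Ŵ : ℤ → ℝ, k_max ∈ ℤ with k_max ≠ 0, and m ∈ ℝ satisfy Ŵ(k_max) > 0, 0 ≤ m < Ŵ(k_max), and Ŵ(k) ≤ m for all k ∉ {−k_max, k_max}. Set α* = 1/Ŵ(k_max). Let û : ℤ → ℂ be square-summable with û(k_max) = û(−k_max) = 0 (input unaligned with the leading modes). Then for every α ∈ (0, α*], the steady-state response ẑ_α(k) = û(k)/(1 − α Ŵ(k)) (with ẑ_α(±k_max) = 0) satisfies the uniform bound Σ_k |ẑ_α(k)|² ≤ (1 − m/Ŵ(k_max))^{-2} Σ_k |û(k)|². -/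
/-- for an input unaligned with the leading modes
(`û(k_max) = û(−k_max) = 0`, so that `ẑ_α(±k_max) = 0`), the steady-state response
`ẑ_α(k) = û(k)/(1 − α Ŵ(k))` satisfies the uniform bound
`Σ_k |ẑ_α(k)|² ≤ (1 − m/Ŵ(k_max))⁻² Σ_k |û(k)|²` for every `α ∈ (0, α*]`. -/
theorem unaligned_input_not_amplified
    (What : ℤ → ℝ) (kmax : ℤ) (hkmax : kmax ≠ 0) (m : ℝ)
    (hpos : 0 < What kmax) (hm0 : 0 ≤ m) (hm : m < What kmax)
    (hother : ∀ k : ℤ, k ≠ kmax → k ≠ -kmax → What k ≤ m)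
    (uhat : ℤ → ℂ) (hu : Summable fun k => ‖uhat k‖ ^ 2)
    (hu1 : uhat kmax = 0) (hu2 : uhat (-kmax) = 0) :
    ∀ α : ℝ, 0 < α → α ≤ 1 / What kmax →
      ∑' k : ℤ, ‖uhat k / ((1 - α * What k : ℝ) : ℂ)‖ ^ 2
        ≤ ((1 - m / What kmax)⁻¹) ^ 2 * ∑' k : ℤ, ‖uhat k‖ ^ 2 := by
  intro α hα hαle
  have hc : 0 < 1 - m / What kmax := by
    have : m / What kmax < 1 := (div_lt_one hpos).mpr hm
    linarith
  set C : ℝ := (1 - m / What kmax)⁻¹ with hC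
  have hC0 : 0 < C := inv_pos.mpr hc
  -- termwise bound
  have key : ∀ k : ℤ, ‖uhat k / ((1 - α * What k : ℝ) : ℂ)‖ ^ 2 ≤ C ^ 2 * ‖uhat k‖ ^ 2 := by
    intro k
    by_cases h1 : k = kmax
    · simp [h1, hu1]
    by_cases h2 : k = -kmax
    · simp [h2, hu2]
    have hWk : What k ≤ m := hother k h1 h2
    have hαm : α * What k ≤ m / What kmax := by
      have h1 : α * What k ≤ α * m := by nlinarith
      have h2 : α * m ≤ (1 / What kmax) * m := by nlinarith
      calc α * What k ≤ α * m := h1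
        _ ≤ (1 / What kmax) * m := h2
        _ = m / What kmax := by ring
    have hden : 1 - m / What kmax ≤ 1 - α * What k := by linarith
    have hdenpos : 0 < 1 - α * What k := lt_of_lt_of_le hc hden
    rw [norm_div, div_pow]
    have hnorm : ‖((1 - α * What k : ℝ) : ℂ)‖ = 1 - α * What k := by
      rw [Complex.norm_real, Real.norm_eq_abs, abs_of_pos hdenpos]
    rw [hnorm]
    rw [div_le_iff₀ (by positivity)]
    have hCle : 1 ≤ C * (1 - α * What k) := by
      rw [hC, inv_mul_eq_div]
      exact (one_le_div hc).mpr hden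
    have hsq : 1 ≤ (C * (1 - α * What k)) ^ 2 := by nlinarith
    nlinarith [hsq, sq_nonneg (‖uhat k‖)]
  have hsum2 : Summable fun k => C ^ 2 * ‖uhat k‖ ^ 2 := hu.mul_left _
  have hsum1 : Summable fun k : ℤ => ‖uhat k / ((1 - α * What k : ℝ) : ℂ)‖ ^ 2 :=
    Summable.of_nonneg_of_le (fun k => by positivity) key hsum2
  calc ∑' k : ℤ, ‖uhat k / ((1 - α * What k : ℝ) : ℂ)‖ ^ 2
      ≤ ∑' k : ℤ, C ^ 2 * ‖uhat k‖ ^ 2 := Summable.tsum_le_tsum key hsum1 hsum2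
    _ = C ^ 2 * ∑' k : ℤ, ‖uhat k‖ ^ 2 := tsum_mul_left
end
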